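/- arXiv:2206.06074 — 2 statements merged into one kernel-verified Lean document; each statement's English description precedes it below -/
import Mathlib

section
/- Given a secret state x_s(0), a state x_ns(0) ≠ x_s(0) makes x_s(0) opaque (i.e., x_s(0) →_o {x_ns(0)}) if and only if x_ns(0) ∈ x_s(0) + V(Γ), where + denotes the Minkowski sum of the point with the subspace V(Γ). -/
open Matrix

/-- State trajectory of the LTI system x(k+1) = A x(k) + B u(k). -/
noncomputable def traj {n p : ℕ} (A : Matrix (Fin n) (Fin n) ℝ) (B : Matrix (Fin n) (Fin p) ℝ)
    (u : ℕ → Fin p → ℝ) (x0 : Fin n → ℝ) : ℕ → Fin n → ℝ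
  | 0 => x0
  | k + 1 => A.mulVec (traj A B u x0 k) + B.mulVec (u k)

/-- Output y(k) = C x(k) + D u(k). -/
noncomputable def outSeq {n p m : ℕ} (A : Matrix (Fin n) (Fin n) ℝ) (B : Matrix (Fin n) (Fin p) ℝ)
    (C : Matrix (Fin m) (Fin n) ℝ) (D : Matrix (Fin m) (Fin p) ℝ)
    (u : ℕ → Fin p → ℝ) (x0 : Fin n → ℝ) (k : ℕ) : Fin m → ℝ :=
  C.mulVec (traj A B u x0 k) + D.mulVec (u k)

/-- Weakly unobservable subspace: states from which some input sequence keeps the output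
identically zero. -/
noncomputable def wus {n p m : ℕ} (A : Matrix (Fin n) (Fin n) ℝ) (B : Matrix (Fin n) (Fin p) ℝ)
    (C : Matrix (Fin m) (Fin n) ℝ) (D : Matrix (Fin m) (Fin p) ℝ) : Set (Fin n → ℝ) :=
  {x | ∃ u : ℕ → Fin p → ℝ, ∀ k : ℕ, outSeq A B C D u x k = 0}

/-- Opacity of the secret initial state `xs` with respect to the non-secret initial state `xns`:
for every input sequence applied from `xs` there is an input sequence from `xns` producing the
same output sequence. -/
noncomputable def isOpaque {n p m : ℕ} (A : Matrix (Fin n) (Fin n) ℝ) (B : Matrix (Fin n) (Fin p) ℝ)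
    (C : Matrix (Fin m) (Fin n) ℝ) (D : Matrix (Fin m) (Fin p) ℝ)
    (xs xns : Fin n → ℝ) : Prop :=
  ∀ us : ℕ → Fin p → ℝ, ∃ uns : ℕ → Fin p → ℝ,
    ∀ k : ℕ, outSeq A B C D us xs k = outSeq A B C D uns xns k


lemma traj_sub {n p : ℕ} (A : Matrix (Fin n) (Fin n) ℝ) (B : Matrix (Fin n) (Fin p) ℝ)
    (u u' : ℕ → Fin p → ℝ) (x x' : Fin n → ℝ) (k : ℕ) :
    traj A B (u - u') (x - x') k = traj A B u x k - traj A B u' x' k := by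
  induction k with
  | zero => rfl
  | succ k ih =>
    simp only [traj, ih, Pi.sub_apply, Matrix.mulVec_sub]
    abel

lemma outSeq_sub {n p m : ℕ} (A : Matrix (Fin n) (Fin n) ℝ) (B : Matrix (Fin n) (Fin p) ℝ)
    (C : Matrix (Fin m) (Fin n) ℝ) (D : Matrix (Fin m) (Fin p) ℝ)
    (u u' : ℕ → Fin p → ℝ) (x x' : Fin n → ℝ) (k : ℕ) :
    outSeq A B C D (u - u') (x - x') k = outSeq A B C D u x k - outSeq A B C D u' x' k := by
  simp only [outSeq, traj_sub, Pi.sub_apply, Matrix.mulVec_sub]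
  abel

/-- Given xs, a state xns ≠ xs makes xs opaque iff xns ∈ xs ⊕ V(Γ). -/
theorem opaque_iff_mem_coset {n p m : ℕ}
    (A : Matrix (Fin n) (Fin n) ℝ) (B : Matrix (Fin n) (Fin p) ℝ)
    (C : Matrix (Fin m) (Fin n) ℝ) (D : Matrix (Fin m) (Fin p) ℝ)
    (xs xns : Fin n → ℝ) (hne : xns ≠ xs) :
    isOpaque A B C D xs xns ↔ ∃ v ∈ wus A B C D, xns = xs + v := by
  constructor
  · intro h
    obtain ⟨uns, huns⟩ := h 0
    refine ⟨xns - xs, ⟨uns - 0, fun k => ?_⟩, by abel⟩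
    rw [outSeq_sub, ← huns k, sub_self]
  · rintro ⟨v, ⟨u0, hu0⟩, rfl⟩
    intro us
    refine ⟨us + u0, fun k => ?_⟩
    have := outSeq_sub A B C D (us + u0) u0 (xs + v) v k
    simp only [add_sub_cancel_right, hu0, sub_zero] at this
    rw [this]
end

section
/- If V(Γ̃) ≠ 0 and the attacked system Γ̃ is observable (O_{n-1} has full column rank n), then for every k ≥ 0 there exists a nonzero undetectable attack input sequence Ũ_u(k), i.e., a nonzero Ũ_u(k) and an initial state x(0) with O_k x(0) + F̃_k Ũ_u(k) = 0. -/
open Matrix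

lemma traj_shift {n p : ℕ} (A : Matrix (Fin n) (Fin n) ℝ) (B : Matrix (Fin n) (Fin p) ℝ)
    (u : ℕ → Fin p → ℝ) (x0 : Fin n → ℝ) (t : ℕ) :
    ∀ j, traj A B (fun i => u (t + i)) (traj A B u x0 t) j = traj A B u x0 (t + j) := by
  intro j
  induction j with
  | zero => rfl
  | succ j ih =>
      show _ = traj A B u x0 (t + j + 1)
      simp only [traj, ih]

lemma traj_zero_input {n p : ℕ} (A : Matrix (Fin n) (Fin n) ℝ) (B : Matrix (Fin n) (Fin p) ℝ)
    (u : ℕ → Fin p → ℝ) (hu : ∀ t, u t = 0) (x0 : Fin n → ℝ) :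
    ∀ j, traj A B u x0 j = (A ^ j).mulVec x0 := by
  intro j
  induction j with
  | zero => simp [traj]
  | succ j ih =>
      simp only [traj, ih, hu, Pi.zero_apply, Matrix.mulVec_zero, add_zero,
        Matrix.mulVec_mulVec, ← pow_succ']

/-- If V(Γ̃) ≠ 0 and Γ̃ is observable, then for every k there exists a nonzero attack input
sequence that is undetectable up to time k (zero output from some initial state). -/
theorem exists_nonzero_undetectable_attack {n q m : ℕ}
    (A : Matrix (Fin n) (Fin n) ℝ) (Bt : Matrix (Fin n) (Fin q) ℝ)
    (C : Matrix (Fin m) (Fin n) ℝ) (Dt : Matrix (Fin m) (Fin q) ℝ)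
    (hV : wus A Bt C Dt ≠ {0})
    (hobs : ∀ x : Fin n → ℝ, (∀ j < n, C.mulVec ((A ^ j).mulVec x) = 0) → x = 0) :
    ∀ k : ℕ, ∃ (u : ℕ → Fin q → ℝ) (x0 : Fin n → ℝ),
      (∃ j ≤ k, u j ≠ 0) ∧ ∀ j ≤ k, outSeq A Bt C Dt u x0 j = 0 := by
  intro k
  -- 0 ∈ wus
  have h0 : (0 : Fin n → ℝ) ∈ wus A Bt C Dt := by
    refine ⟨0, fun j => ?_⟩
    have ht : traj A Bt 0 0 j = 0 := by
      induction j with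
      | zero => rfl
      | succ j ih => simp [traj, ih]
    simp [outSeq, ht]
  -- get nonzero element of wus
  have : ¬ (wus A Bt C Dt ⊆ {0}) := by
    intro hsub
    exact hV (Set.Subset.antisymm hsub (by simpa using h0))
  obtain ⟨x0, hx0mem, hx0ne⟩ : ∃ x, x ∈ wus A Bt C Dt ∧ x ≠ 0 := by
    rcases Set.not_subset.mp this with ⟨x, hx, hne⟩
    exact ⟨x, hx, by simpa using hne⟩
  obtain ⟨u, hu⟩ := hx0mem
  -- u cannot be identically zero
  have hut : ∃ t, u t ≠ 0 := by
    by_contra h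
    push_neg at h
    apply hx0ne
    apply hobs
    intro j _
    have := hu j
    simpa [outSeq, traj_zero_input A Bt u h x0 j, h] using this
  obtain ⟨t, hut⟩ := hut
  refine ⟨fun i => u (t + i), traj A Bt u x0 t, ⟨0, Nat.zero_le k, by simpa using hut⟩,
    fun j _ => ?_⟩
  have := hu (t + j)
  simpa [outSeq, traj_shift A Bt u x0 t j] using this
end
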